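/- arXiv:0711.2555 — 2 statements merged into one kernel-verified Lean document; each statement's English description precedes it below -/
import Mathlib

section
/- Let a > √3 and set c(a) = (9/8)(a + 1/a) and ℓ(a) = F_a(0,0) = (9/64)(a + 1/a)². Then the level set S = {(x,y) ∈ ℝ² : F_a(x,y) = ℓ(a)} is compact, contains the origin, and S \ {(0,0)} has exactly two connected components (the two lobes of the homoclinic figure eight), which are exchanged by the reflection (x,y) ↦ (-x,y). -/
/-!
With `Q = a x² + y²/a` and `L = (a² - 3) x² - (3 - 1/a²) y²` one has
`F_a - ℓ(a) = (Q² - (9/4) L) / 9`, so the level set is the quartic curve `Q² = (9/4) L`.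
Both forms are homogeneous of degree two, hence a ray `t • (1, m)`, `t > 0`, meets the curve
exactly once if `L(1, m) > 0` and not at all otherwise: the part of the curve in `x > 0` is the
continuous image of the interval `{m | L(1, m) > 0}`, which is nonempty because `a² > 3`.
Since `3 - 1/a² > 0`, the curve meets the axis `x = 0` only at the origin, and the part in
`x < 0` is the mirror image of the part in `x > 0` because `F_a` is even in `x`. The two open
half-planes then separate the two lobes.
-/

/-- `F_a`, the Casimir `K` restricted to the light-cone paraboloid `{H_a(M,1) = 0}` of the
reduced Fefferman Hamiltonian, in the coordinates `(M₁, M₂) = (x, y)`. -/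
noncomputable def Fa (a : ℝ) (p : ℝ × ℝ) : ℝ :=
  p.1 ^ 2 + p.2 ^ 2 + (1/9) * (a * p.1 ^ 2 + p.2 ^ 2 / a - (9/8) * (a + 1/a)) ^ 2

open Set

noncomputable def saddleLevel (a : ℝ) : ℝ := 9 / 64 * (a + 1 / a) ^ 2

noncomputable def Qa (a : ℝ) (p : ℝ × ℝ) : ℝ := a * p.1 ^ 2 + p.2 ^ 2 / a

noncomputable def La (a : ℝ) (p : ℝ × ℝ) : ℝ :=
  (a ^ 2 - 3) * p.1 ^ 2 - (3 - 1 / a ^ 2) * p.2 ^ 2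

theorem Fa_sub_saddleLevel {a : ℝ} (ha : a ≠ 0) (p : ℝ × ℝ) :
    Fa a p - saddleLevel a = (Qa a p ^ 2 - 9 / 4 * La a p) / 9 := by
  unfold Fa saddleLevel Qa La
  field_simp
  ring

theorem Fa_eq_saddleLevel_iff {a : ℝ} (ha : a ≠ 0) {p : ℝ × ℝ} :
    Fa a p = saddleLevel a ↔ Qa a p ^ 2 = 9 / 4 * La a p := by
  rw [← sub_eq_zero, Fa_sub_saddleLevel ha, div_eq_zero_iff, sub_eq_zero]
  norm_num

theorem Fa_zero (a : ℝ) : Fa a (0, 0) = saddleLevel a := by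
  unfold Fa saddleLevel
  ring

theorem Fa_neg_fst (a : ℝ) (p : ℝ × ℝ) : Fa a (-p.1, p.2) = Fa a p := by
  unfold Fa
  ring

theorem continuous_Fa (a : ℝ) : Continuous (Fa a) := by
  unfold Fa
  fun_prop

theorem sq_add_sq_le_Fa (a : ℝ) (p : ℝ × ℝ) : p.1 ^ 2 + p.2 ^ 2 ≤ Fa a p :=
  le_add_of_nonneg_right (by positivity)

theorem isCompact_Fa_eq (a c : ℝ) : IsCompact {p : ℝ × ℝ | Fa a p = c} := by
  refine (isCompact_closedBall (0 : ℝ × ℝ) √c).of_isClosed_subset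
    (isClosed_eq (continuous_Fa a) continuous_const) fun p (hp : Fa a p = c) => ?_
  have hle := sq_add_sq_le_Fa a p
  rw [mem_closedBall_zero_iff, Prod.norm_def, Real.norm_eq_abs, Real.norm_eq_abs]
  exact max_le (Real.abs_le_sqrt (by nlinarith [sq_nonneg p.2]))
    (Real.abs_le_sqrt (by nlinarith [sq_nonneg p.1]))

theorem three_sub_one_div_sq_pos {a : ℝ} (ha : 1 < 3 * a ^ 2) : 0 < 3 - 1 / a ^ 2 := by
  rw [sub_pos, div_lt_iff₀ (by linarith)]
  linarith

theorem fst_ne_zero_of_Fa_eq_saddleLevel {a : ℝ} (ha : 1 < 3 * a ^ 2) {p : ℝ × ℝ}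
    (hp : Fa a p = saddleLevel a) (hp0 : p ≠ (0, 0)) : p.1 ≠ 0 := by
  intro hx
  have ha0 : a ≠ 0 := by rintro rfl; norm_num at ha
  have hc := three_sub_one_div_sq_pos ha
  rw [Fa_eq_saddleLevel_iff ha0, Qa, La, hx] at hp
  have hy : p.2 ^ 2 = 0 := by nlinarith [sq_nonneg (p.2 ^ 2 / a), sq_nonneg p.2]
  exact hp0 (Prod.ext hx (pow_eq_zero_iff two_ne_zero |>.mp hy))

theorem Qa_smul (a t : ℝ) (p : ℝ × ℝ) : Qa a (t • p) = t ^ 2 * Qa a p := by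
  simp only [Qa, Prod.smul_fst, Prod.smul_snd, smul_eq_mul]
  ring

theorem La_smul (a t : ℝ) (p : ℝ × ℝ) : La a (t • p) = t ^ 2 * La a p := by
  simp only [La, Prod.smul_fst, Prod.smul_snd, smul_eq_mul]
  ring

theorem Qa_one_pos {a : ℝ} (ha : 0 < a) (m : ℝ) : 0 < Qa a (1, m) := by
  unfold Qa
  positivity

theorem Fa_smul_eq_saddleLevel_iff {a t : ℝ} (ha : 0 < a) (ht : 0 < t) (m : ℝ) :
    Fa a (t • (1, m)) = saddleLevel a ↔
      0 < La a (1, m) ∧ t = 3 / 2 * √(La a (1, m)) / Qa a (1, m) := by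
  have hQ := Qa_one_pos ha m
  rw [Fa_eq_saddleLevel_iff ha.ne', Qa_smul, La_smul]
  constructor
  · intro h
    have hL : La a (1, m) = (2 / 3 * t * Qa a (1, m)) ^ 2 := by
      have : t ^ 2 * (t ^ 2 * Qa a (1, m) ^ 2 - 9 / 4 * La a (1, m)) = 0 := by
        linear_combination h
      rcases mul_eq_zero.mp this with h0 | h0
      · exact absurd h0 (by positivity)
      · linear_combination (-4 / 9) * h0
    refine ⟨hL ▸ by positivity, ?_⟩
    rw [hL, Real.sqrt_sq (by positivity)]
    field_simp
  · rintro ⟨hL, rfl⟩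
    field_simp
    rw [Real.sq_sqrt hL.le]
    ring

noncomputable def lobe (a m : ℝ) : ℝ × ℝ :=
  (3 / 2 * √(La a (1, m)) / Qa a (1, m)) • (1, m)

theorem continuous_lobe {a : ℝ} (ha : 0 < a) : Continuous (lobe a) := by
  have hQ : Continuous fun m => Qa a (1, m) := by unfold Qa; fun_prop
  have hL : Continuous fun m => La a (1, m) := by unfold La; fun_prop
  exact ((continuous_const.mul hL.sqrt).div hQ fun m => (Qa_one_pos ha m).ne').smul
    (continuous_const.prodMk continuous_id)

theorem image_lobe {a : ℝ} (ha : 0 < a) :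
    lobe a '' {m | 0 < La a (1, m)} = {p | Fa a p = saddleLevel a} ∩ {p | 0 < p.1} := by
  ext p
  constructor
  · rintro ⟨m, hm, rfl⟩
    have ht : 0 < 3 / 2 * √(La a (1, m)) / Qa a (1, m) := by
      have := Qa_one_pos ha m
      have := Real.sqrt_pos.mpr hm
      positivity
    refine ⟨(Fa_smul_eq_saddleLevel_iff ha ht m).mpr ⟨hm, rfl⟩, ?_⟩
    simpa [lobe] using ht
  · rintro ⟨hp : Fa a p = _, hx : 0 < p.1⟩
    have hp' : p = p.1 • (1, p.2 / p.1) := by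
      ext
      · simp
      · simp only [Prod.smul_snd, smul_eq_mul]
        field_simp
    rw [hp'] at hp
    obtain ⟨hL, ht⟩ := (Fa_smul_eq_saddleLevel_iff ha hx _).mp hp
    exact ⟨p.2 / p.1, hL, by rw [lobe, ← ht, ← hp']⟩

theorem ordConnected_setOf_mul_sq_lt {c d : ℝ} (hc : 0 ≤ c) :
    OrdConnected {m : ℝ | c * m ^ 2 < d} := by
  refine ⟨fun x (hx : c * x ^ 2 < d) y (hy : c * y ^ 2 < d) z hz => ?_⟩
  show c * z ^ 2 < d
  rcases le_total 0 z with h | h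
  · nlinarith [mul_le_mul_of_nonneg_left (pow_le_pow_left₀ h hz.2 2) hc]
  · nlinarith [mul_le_mul_of_nonneg_left
      (pow_le_pow_left₀ (neg_nonneg.mpr h) (neg_le_neg hz.1) 2) hc]

theorem isConnected_setOf_La_pos {a : ℝ} (ha : 3 < a ^ 2) :
    IsConnected {m | 0 < La a (1, m)} := by
  have hc := three_sub_one_div_sq_pos (a := a) (by linarith)
  have hset : {m | 0 < La a (1, m)} = {m : ℝ | (3 - 1 / a ^ 2) * m ^ 2 < a ^ 2 - 3} := by
    ext m
    show 0 < La a (1, m) ↔ (3 - 1 / a ^ 2) * m ^ 2 < a ^ 2 - 3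
    simp only [La, one_pow, mul_one]
    constructor <;> intro h <;> linarith
  rw [hset]
  exact ⟨⟨0, by simpa using ha⟩, (ordConnected_setOf_mul_sq_lt hc.le).isPreconnected⟩

section Separation

variable {X : Type*} [TopologicalSpace X] {A B U V : Set X}

theorem connectedComponentIn_union_eq_left (hU : IsOpen U) (hV : IsOpen V) (hUV : Disjoint U V)
    (hAU : A ⊆ U) (hBV : B ⊆ V) (hA : IsPreconnected A) {x : X} (hx : x ∈ A) :
    connectedComponentIn (A ∪ B) x = A := by
  refine Subset.antisymm (fun q hq => ?_) (hA.subset_connectedComponentIn hx subset_union_left)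
  have hsub := connectedComponentIn_subset (A ∪ B) x
  have hCU : connectedComponentIn (A ∪ B) x ⊆ U :=
    isPreconnected_connectedComponentIn.subset_left_of_subset_union hU hV hUV
      (hsub.trans (union_subset_union hAU hBV))
      ⟨x, mem_connectedComponentIn (subset_union_left hx), hAU hx⟩
  exact (hsub hq).resolve_right fun hqB => disjoint_left.mp hUV (hCU hq) (hBV hqB)

theorem connectedComponentIn_union_eq_or (hU : IsOpen U) (hV : IsOpen V) (hUV : Disjoint U V)
    (hAU : A ⊆ U) (hBV : B ⊆ V) (hA : IsPreconnected A) (hB : IsPreconnected B) :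
    ∀ x ∈ A ∪ B,
      connectedComponentIn (A ∪ B) x = A ∨ connectedComponentIn (A ∪ B) x = B := by
  rintro x (hx | hx)
  · exact .inl (connectedComponentIn_union_eq_left hU hV hUV hAU hBV hA hx)
  · exact .inr <|
      union_comm A B ▸ connectedComponentIn_union_eq_left hV hU hUV.symm hBV hAU hB hx

end Separation

/-- For `a > √3`, the level set of `F_a` through the origin (at level
`ℓ(a) = F_a(0,0) = (9/64)(a+1/a)²`) is compact, contains the origin, and with the origin
removed has exactly two connected components -- the two lobes of the homoclinic figure
eight -- exchanged by the reflection `(x,y) ↦ (-x,y)`. -/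
theorem Fa_figure_eight (a : ℝ) (ha : Real.sqrt 3 < a)
    (S : Set (ℝ × ℝ)) (hS : S = {p : ℝ × ℝ | Fa a p = (9/64) * (a + 1/a) ^ 2}) :
    IsCompact S ∧ ((0, 0) : ℝ × ℝ) ∈ S ∧
    ∃ A B : Set (ℝ × ℝ),
      IsConnected A ∧ IsConnected B ∧ Disjoint A B ∧ A ∪ B = S \ {(0, 0)} ∧
      (∀ p ∈ S \ {((0 : ℝ), (0 : ℝ))},
        connectedComponentIn (S \ {(0, 0)}) p = A ∨
        connectedComponentIn (S \ {(0, 0)}) p = B) ∧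
      (fun p : ℝ × ℝ => (-p.1, p.2)) '' A = B := by
  replace hS : S = {p | Fa a p = saddleLevel a} := hS
  have ha0 : 0 < a := (Real.sqrt_nonneg 3).trans_lt ha
  have ha3 : 3 < a ^ 2 := by simpa using (Real.sqrt_lt' ha0).mp ha
  set σ : ℝ × ℝ → ℝ × ℝ := fun p => (-p.1, p.2)
  set U : Set (ℝ × ℝ) := {p | 0 < p.1}
  set V : Set (ℝ × ℝ) := {p | p.1 < 0}
  have hUV : Disjoint U V := disjoint_left.mpr fun p (hU : 0 < p.1) (hV : p.1 < 0) => hU.not_gt hV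
  have hA : IsConnected (S ∩ U) := hS ▸ image_lobe ha0 ▸
    (isConnected_setOf_La_pos ha3).image _ (continuous_lobe ha0).continuousOn
  have hσ : σ '' (S ∩ U) = S ∩ V := by
    rw [image_eq_preimage_of_inverse (g := σ) (fun p => by simp [σ]) (fun p => by simp [σ]), hS]
    ext p
    simp [σ, U, V, Fa_neg_fst]
  have hB : IsConnected (S ∩ V) := hσ ▸ hA.image σ (by fun_prop)
  have hAB : S ∩ U ∪ S ∩ V = S \ {(0, 0)} := by
    rw [← inter_union_distrib_left]
    ext p
    refine and_congr_right fun hp => ?_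
    change 0 < p.1 ∨ p.1 < 0 ↔ p ≠ (0, 0)
    rw [or_comm, lt_or_lt_iff_ne]
    exact ⟨fun hx h0 => hx (by simp [h0]),
      fst_ne_zero_of_Fa_eq_saddleLevel (by linarith) (hS ▸ hp)⟩
  refine ⟨hS ▸ isCompact_Fa_eq _ _, hS ▸ Fa_zero a, S ∩ U, S ∩ V, hA, hB,
    hUV.mono inter_subset_right inter_subset_right, hAB, hAB ▸ ?_, hσ⟩
  exact connectedComponentIn_union_eq_or (isOpen_lt continuous_const continuous_fst)
    (isOpen_lt continuous_fst continuous_const) hUV inter_subset_right inter_subset_right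
    hA.isPreconnected hB.isPreconnected
end

section
/- Let C ⊆ ℍ be a geometric circle, i.e. C = {p + cos(s)·v + sin(s)·w : s ∈ ℝ} for some p, v, w ∈ ℍ with ‖v‖ = ‖w‖ ≠ 0 and ⟨v,w⟩ = 0. Suppose C is contained in the unit sphere {x ∈ ℍ : ‖x‖ = 1} and 1 ∈ C. Then there exist purely imaginary quaternions α, β with ‖α‖ = ‖β‖ such that C = {exp(tα)·exp(-tβ) : t ∈ ℝ}. -/
open Quaternion RealInnerProductSpace

/-!
For a unit imaginary quaternion `n`, `exp (s • n) = cos s + sin s • n`, so by the half-angle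
formulas `exp ((t/2) • n) * exp (-(t/2) • m)` traces the circle with centre `(1 - n m)/2` and
radius vectors `(1 + n m)/2`, `(n - m)/2`. Conversely, shift the parameter so that `1 = p + v`.
As the circle lies on the unit sphere, `p ⟂ v, w`; hence `w` is imaginary and
`v = ‖w‖² + v.im` with `v.im ⟂ w`. Then `u = w⁻¹ v.im` is imaginary, anticommutes with `w`,
and `‖u‖² = 1 - ‖w‖²`, so `n = u + w` and `m = u - w` are unit imaginary quaternions with
`(1 + n m)/2 = v` and `(n - m)/2 = w`.
-/

section Circle

variable {E : Type*}

section Module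

variable [AddCommGroup E] [Module ℝ E]

noncomputable def circleParam (p v w : E) (s : ℝ) : E :=
  p + Real.cos s • v + Real.sin s • w

theorem circleParam_add (p v w : E) (s₀ s : ℝ) :
    circleParam p v w (s + s₀) =
      circleParam p (Real.cos s₀ • v + Real.sin s₀ • w)
        (-Real.sin s₀ • v + Real.cos s₀ • w) s := by
  simp only [circleParam, Real.cos_add, Real.sin_add]
  module

theorem range_circleParam_rotate (p v w : E) (s₀ : ℝ) :
    Set.range (circleParam p v w) =
      Set.range (circleParam p (Real.cos s₀ • v + Real.sin s₀ • w)
        (-Real.sin s₀ • v + Real.cos s₀ • w)) := by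
  rw [← (Equiv.addRight s₀).surjective.range_comp]
  exact congrArg Set.range (funext fun s => circleParam_add p v w s₀ s)

end Module

variable [NormedAddCommGroup E] [InnerProductSpace ℝ E]

theorem norm_rotate_eq_and_inner_rotate_eq_zero {v w : E} (hvw : ‖v‖ = ‖w‖)
    (hortho : ⟪v, w⟫ = 0) (θ : ℝ) :
    ‖Real.cos θ • v + Real.sin θ • w‖ = ‖-Real.sin θ • v + Real.cos θ • w‖ ∧
      ⟪Real.cos θ • v + Real.sin θ • w, -Real.sin θ • v + Real.cos θ • w⟫ = 0 := by
  have hwv : ⟪w, v⟫ = 0 := by rwa [real_inner_comm]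
  have hww : ⟪w, w⟫ = ⟪v, v⟫ := by simp only [real_inner_self_eq_norm_sq, hvw]
  constructor
  · rw [← sq_eq_sq₀ (norm_nonneg _) (norm_nonneg _), ← real_inner_self_eq_norm_sq,
      ← real_inner_self_eq_norm_sq]
    simp only [inner_add_left, inner_add_right, real_inner_smul_left, real_inner_smul_right,
      hortho, hwv, hww]
    ring
  · simp only [inner_add_left, inner_add_right, real_inner_smul_left, real_inner_smul_right,
      hortho, hwv, hww]
    ring

theorem inner_eq_zero_of_norm_add_eq_norm_sub {p x : E} (h : ‖p + x‖ = ‖p - x‖) :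
    ⟪p, x⟫ = 0 := by
  have hadd := norm_add_sq_real p x
  have hsub := norm_sub_sq_real p x
  rw [h] at hadd
  linarith

theorem inner_eq_zero_of_forall_norm_circleParam_eq {p v w : E} {r : ℝ}
    (h : ∀ s, ‖circleParam p v w s‖ = r) : ⟪p, v⟫ = 0 ∧ ⟪p, w⟫ = 0 := by
  have h0 := h 0
  have hπ := h Real.pi
  have hπ2 := h (Real.pi / 2)
  have hπ2' := h (-(Real.pi / 2))
  simp only [circleParam, Real.cos_zero, Real.sin_zero, Real.cos_pi, Real.sin_pi,
    Real.cos_pi_div_two, Real.sin_pi_div_two, Real.cos_neg, Real.sin_neg, one_smul, zero_smul,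
    neg_smul, add_zero, ← sub_eq_add_neg] at h0 hπ hπ2 hπ2'
  exact ⟨inner_eq_zero_of_norm_add_eq_norm_sub (h0.trans hπ.symm),
    inner_eq_zero_of_norm_add_eq_norm_sub (hπ2.trans hπ2'.symm)⟩

end Circle

namespace Quaternion

theorem normSq_eq_re_sq_add_normSq_im {R : Type*} [CommRing R] (q : ℍ[R]) :
    normSq q = q.re ^ 2 + normSq q.im := by
  simp only [normSq_def', re_im, imI_im, imJ_im, imK_im]
  ring

theorem inner_one_left (q : ℍ[ℝ]) : ⟪1, q⟫ = q.re := by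
  simp [inner_def]

theorem re_mul_eq_neg_inner {a b : ℍ[ℝ]} (hb : b.re = 0) : (a * b).re = -⟪a, b⟫ := by
  rw [inner_def, star_eq_neg.2 hb, mul_neg, re_neg, neg_neg]

theorem mul_self_of_re_eq_zero {a : ℍ[ℝ]} (ha : a.re = 0) :
    a * a = -((normSq a : ℝ) : ℍ[ℝ]) := by
  rw [← sq, sq_eq_neg_normSq.2 ha]

theorem mul_add_mul_swap_of_re_eq_zero {a b : ℍ[ℝ]} (ha : a.re = 0) (hb : b.re = 0) :
    a * b + b * a = ((-2 * ⟪a, b⟫ : ℝ) : ℍ[ℝ]) := by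
  have hab : (a + b).re = 0 := by rw [re_add, ha, hb, add_zero]
  calc a * b + b * a = (a + b) ^ 2 - a ^ 2 - b ^ 2 := by noncomm_ring
    _ = ((-2 * ⟪a, b⟫ : ℝ) : ℍ[ℝ]) := by
      rw [sq_eq_neg_normSq.2 hab, sq_eq_neg_normSq.2 ha, sq_eq_neg_normSq.2 hb, normSq_add,
        ← inner_def]
      push_cast
      noncomm_ring

theorem norm_eq_one_of_mul_self_eq_neg_one {a : ℍ[ℝ]} (ha : a.re = 0) (h : a * a = -1) :
    ‖a‖ = 1 := by
  rw [mul_self_of_re_eq_zero ha, neg_inj, ← coe_one, coe_inj, normSq_eq_norm_mul_self,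
    mul_self_eq_one_iff] at h
  exact h.resolve_right (by linarith [norm_nonneg a])

theorem exp_smul_of_re_eq_zero_of_norm_eq_one {n : ℍ[ℝ]} (hre : n.re = 0) (hn : ‖n‖ = 1)
    (t : ℝ) : NormedSpace.exp (t • n) = (Real.cos t : ℍ[ℝ]) + Real.sin t • n := by
  rcases eq_or_ne t 0 with rfl | ht
  · simp
  rw [exp_of_re_eq_zero _ (by rw [re_smul, hre, smul_zero]), norm_smul, hn, mul_one,
    Real.norm_eq_abs, smul_smul]
  rcases abs_choice t with h | h <;> rw [h]
  · rw [div_mul_cancel₀ _ ht]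
  · rw [Real.cos_neg, Real.sin_neg, neg_div_neg_eq, div_mul_cancel₀ _ ht]

theorem exp_half_smul_mul_exp_neg_half_smul {n m : ℍ[ℝ]} (hn : n.re = 0) (hn1 : ‖n‖ = 1)
    (hm : m.re = 0) (hm1 : ‖m‖ = 1) (t : ℝ) :
    NormedSpace.exp (t • (2⁻¹ : ℝ) • n) * NormedSpace.exp (-(t • (2⁻¹ : ℝ) • m)) =
      circleParam (1 - (2⁻¹ : ℝ) • (1 + n * m)) ((2⁻¹ : ℝ) • (1 + n * m))
        ((2⁻¹ : ℝ) • (n - m)) t := by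
  have hcoe : ∀ r : ℝ, (r : ℍ[ℝ]) = r • (1 : ℍ[ℝ]) := fun r => by
    rw [← coe_mul_eq_smul, mul_one]
  rw [smul_smul, smul_smul, ← neg_smul, exp_smul_of_re_eq_zero_of_norm_eq_one hn hn1,
    exp_smul_of_re_eq_zero_of_norm_eq_one hm hm1, Real.cos_neg, Real.sin_neg, circleParam]
  conv_rhs => rw [show t = 2 * (t * 2⁻¹) by ring, Real.cos_two_mul', Real.sin_two_mul]
  have hpyth := Real.sin_sq_add_cos_sq (t * 2⁻¹)
  simp only [hcoe, add_mul, mul_add, sub_mul, smul_mul_assoc, mul_smul_comm, one_mul, mul_one,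
    smul_smul, smul_sub, smul_add]
  match_scalars <;> linarith

theorem exists_mul_eq_of_inner_eq_zero {w z : ℍ[ℝ]} (hw : w.re = 0) (hz : z.re = 0)
    (hzw : ⟪z, w⟫ = 0) (hnorm : normSq z = normSq w * (1 - normSq w)) :
    ∃ u : ℍ[ℝ], u.re = 0 ∧ normSq u = 1 - normSq w ∧ w * u = z ∧ u * w = -z := by
  rcases eq_or_ne w 0 with rfl | hw0
  · obtain rfl : z = 0 := by simpa using hnorm
    exact ⟨(Complex.I : ℂ), by simp, by simp [normSq_def'], by simp, by simp⟩
  refine ⟨w⁻¹ * z, ?_, ?_, mul_inv_cancel_left₀ hw0 z, ?_⟩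
  · rw [re_mul_eq_neg_inner hz, inv_def, star_eq_neg.2 hw, smul_neg, inner_neg_left,
      real_inner_smul_left, real_inner_comm, hzw, mul_zero, neg_zero, neg_zero]
  · have hw0' : normSq w ≠ 0 := normSq_ne_zero.2 hw0
    rw [map_mul, normSq_inv, hnorm]
    field_simp
  · have hanti : z * w = -(w * z) := eq_neg_of_add_eq_zero_left (by
      rw [mul_add_mul_swap_of_re_eq_zero hz hw, hzw, mul_zero, coe_zero])
    rw [mul_assoc, hanti, mul_neg, inv_mul_cancel_left₀ hw0]

theorem exists_unit_imaginary_of_anticomm {u w : ℍ[ℝ]} (hu : u.re = 0) (hw : w.re = 0)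
    (hnorm : normSq u + normSq w = 1) (hanti : u * w = -(w * u)) :
    ∃ n m : ℍ[ℝ], n.re = 0 ∧ m.re = 0 ∧ ‖n‖ = 1 ∧ ‖m‖ = 1 ∧
      (2⁻¹ : ℝ) • (1 + n * m) = ((normSq w : ℝ) : ℍ[ℝ]) + w * u ∧ (2⁻¹ : ℝ) • (n - m) = w := by
  have hsum : ((normSq u : ℝ) : ℍ[ℝ]) + (normSq w : ℝ) = 1 := by
    rw [← coe_add, hnorm, coe_one]
  have huu := mul_self_of_re_eq_zero hu
  have hww := mul_self_of_re_eq_zero hw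
  have hre_add : (u + w).re = 0 := by rw [re_add, hu, hw, add_zero]
  have hre_sub : (u - w).re = 0 := by rw [re_sub, hu, hw, sub_zero]
  refine ⟨u + w, u - w, hre_add, hre_sub, norm_eq_one_of_mul_self_eq_neg_one hre_add ?_,
    norm_eq_one_of_mul_self_eq_neg_one hre_sub ?_, ?_, by module⟩
  · calc (u + w) * (u + w) = u * u + w * w + (u * w + w * u) := by noncomm_ring
      _ = -1 := by rw [huu, hww, hanti, neg_add_cancel, add_zero, ← neg_add, hsum]
  · calc (u - w) * (u - w) = u * u + w * w - (u * w + w * u) := by noncomm_ring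
      _ = -1 := by rw [huu, hww, hanti, neg_add_cancel, sub_zero, ← neg_add, hsum]
  · rw [show (u + w) * (u - w) = u * u - w * w - u * w + w * u by noncomm_ring, huu, hww, hanti,
      ← hsum]
    module

theorem exists_unit_imaginary_of_re_eq_normSq {v w : ℍ[ℝ]} (hw : w.re = 0)
    (hv : v.re = normSq w) (hnorm : normSq v = normSq w) (hvw : ⟪v, w⟫ = 0) :
    ∃ n m : ℍ[ℝ], n.re = 0 ∧ m.re = 0 ∧ ‖n‖ = 1 ∧ ‖m‖ = 1 ∧
      (2⁻¹ : ℝ) • (1 + n * m) = v ∧ (2⁻¹ : ℝ) • (n - m) = w := by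
  have him_w : ⟪v.im, w⟫ = 0 := by
    rw [← sub_re_self, inner_sub_left, hvw, inner_def]
    simp [hw]
  have hnorm_im : normSq v.im = normSq w * (1 - normSq w) := by
    linear_combination hnorm - normSq_eq_re_sq_add_normSq_im v - (v.re + normSq w) * hv
  obtain ⟨u, hu, hnorm_u, hwu, huw⟩ := exists_mul_eq_of_inner_eq_zero hw (re_im v) him_w hnorm_im
  rw [← hwu] at huw
  rw [← re_add_im v, hv, ← hwu]
  exact exists_unit_imaginary_of_anticomm hu hw (by rw [hnorm_u, sub_add_cancel]) huw

theorem exists_unit_imaginary_of_add_eq_one {p v w : ℍ[ℝ]} (hp : p + v = 1) (hpv : ⟪p, v⟫ = 0)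
    (hpw : ⟪p, w⟫ = 0) (hvw : ‖v‖ = ‖w‖) (hortho : ⟪v, w⟫ = 0) :
    ∃ n m : ℍ[ℝ], n.re = 0 ∧ m.re = 0 ∧ ‖n‖ = 1 ∧ ‖m‖ = 1 ∧
      (2⁻¹ : ℝ) • (1 + n * m) = v ∧ (2⁻¹ : ℝ) • (n - m) = w := by
  have hnorm : normSq v = normSq w := by
    rw [normSq_eq_norm_mul_self, normSq_eq_norm_mul_self, hvw]
  have hw : w.re = 0 := by rw [← inner_one_left, ← hp, inner_add_left, hpw, hortho, add_zero]
  have hv : v.re = normSq w := by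
    rw [← inner_one_left, ← hp, inner_add_left, hpv, zero_add, inner_self, hnorm]
  exact exists_unit_imaginary_of_re_eq_normSq hw hv hnorm hortho

end Quaternion

theorem circle_on_sphere_is_exp_curve_general (p v w : ℍ[ℝ])
    (hvw : ‖v‖ = ‖w‖) (hortho : ⟪v, w⟫ = 0)
    (C : Set ℍ[ℝ])
    (hC : C = {x : ℍ[ℝ] | ∃ s : ℝ, x = p + Real.cos s • v + Real.sin s • w})
    (hsphere : C ⊆ {x : ℍ[ℝ] | ‖x‖ = 1}) (hone : (1 : ℍ[ℝ]) ∈ C) :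
    ∃ α β : ℍ[ℝ], α.re = 0 ∧ β.re = 0 ∧ ‖α‖ = ‖β‖ ∧
      C = {x : ℍ[ℝ] | ∃ t : ℝ,
        x = NormedSpace.exp (t • α) * NormedSpace.exp (-(t • β))} := by
  have hrange : C = Set.range (circleParam p v w) := by
    rw [hC]; ext x; simp [circleParam, eq_comm]
  obtain ⟨s₀, hs₀⟩ : (1 : ℍ[ℝ]) ∈ Set.range (circleParam p v w) := hrange ▸ hone
  rw [range_circleParam_rotate p v w s₀] at hrange
  obtain ⟨hvw', hortho'⟩ := norm_rotate_eq_and_inner_rotate_eq_zero hvw hortho s₀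
  obtain ⟨hpv, hpw⟩ := inner_eq_zero_of_forall_norm_circleParam_eq (r := 1) fun s =>
    hsphere (hrange ▸ Set.mem_range_self s)
  have hp : p + (Real.cos s₀ • v + Real.sin s₀ • w) = 1 := by
    rw [← hs₀, circleParam, add_assoc]
  obtain ⟨n, m, hn, hm, hn1, hm1, hv', hw'⟩ :=
    exists_unit_imaginary_of_add_eq_one hp hpv hpw hvw' hortho'
  refine ⟨(2⁻¹ : ℝ) • n, (2⁻¹ : ℝ) • m, by simp [hn], by simp [hm],
    by simp [norm_smul, hn1, hm1], ?_⟩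
  rw [hrange, eq_sub_of_add_eq hp, ← hv', ← hw']
  ext x
  simp [exp_half_smul_mul_exp_neg_half_smul hn hn1 hm hm1, eq_comm]

/-- Every geometric circle in `ℍ` contained in the unit sphere `SU(2)` and passing through
the identity `1` can be parameterized as `t ↦ exp(tα)·exp(-tβ)` for purely imaginary
quaternions `α, β` of equal length (the 1:1 resonance condition). -/
theorem circle_on_sphere_is_exp_curve (p v w : ℍ[ℝ])
    (hvw : ‖v‖ = ‖w‖) (hv0 : v ≠ 0) (hortho : ⟪v, w⟫ = 0)
    (C : Set ℍ[ℝ])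
    (hC : C = {x : ℍ[ℝ] | ∃ s : ℝ, x = p + Real.cos s • v + Real.sin s • w})
    (hsphere : C ⊆ {x : ℍ[ℝ] | ‖x‖ = 1}) (hone : (1 : ℍ[ℝ]) ∈ C) :
    ∃ α β : ℍ[ℝ], α.re = 0 ∧ β.re = 0 ∧ ‖α‖ = ‖β‖ ∧
      C = {x : ℍ[ℝ] | ∃ t : ℝ,
        x = NormedSpace.exp (t • α) * NormedSpace.exp (-(t • β))} :=
  circle_on_sphere_is_exp_curve_general p v w hvw hortho C hC hsphere hone
end
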